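/- arXiv:2107.04871 — 2 statements merged into one kernel-verified Lean document; each statement's English description precedes it below -/
import Mathlib

section
/- Let R : ℝⁿ\{0} → ℝ be smooth and positively 0-homogeneous. If its third vertical derivatives admit a decomposition R_{,i,j,k} = A_{ij} I_k + B_i g_{jk} for some tensors A_{ij}, B_i and vectors I, with I_k y^k = 0, then contracting with y^j and y^k and using homogeneity (R_{,i,j}y^j = −R_{,i}) forces R_{,i} = 0 for all i; hence R is constant along each tangent space. -/
noncomputable def pd {n : ℕ} (i : Fin n) (f : (Fin n → ℝ) → ℝ) (y : Fin n → ℝ) : ℝ :=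
  fderiv ℝ f y (Pi.single i 1)

open scoped ContDiff

open Finset

lemma sOpen (m : ℕ) : IsOpen {y : Fin m → ℝ | y ≠ 0} := isOpen_ne

lemma pd_contDiffOn {m : ℕ} {f : (Fin m → ℝ) → ℝ} {s : Set (Fin m → ℝ)} (hs : IsOpen s)
    (hf : ContDiffOn ℝ ∞ f s) (j : Fin m) : ContDiffOn ℝ ∞ (pd j f) s := by
  have h := hf.fderiv_of_isOpen hs (m := ∞) (by simp)
  exact h.clm_apply contDiffOn_const

lemma fderiv_eq_sum_pd {m : ℕ} (f : (Fin m → ℝ) → ℝ) (y v : Fin m → ℝ) :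
    fderiv ℝ f y v = ∑ k, v k * pd k f y := by
  have hv : v = ∑ k, v k • (Pi.single k 1 : Fin m → ℝ) := by
    funext j
    simp [Pi.single_apply]
  conv_lhs => rw [hv]
  rw [map_sum]
  simp [pd, smul_eq_mul]

lemma euler_aux {m : ℕ} {f : (Fin m → ℝ) → ℝ} {y : Fin m → ℝ} (d : ℤ)
    (hf : DifferentiableAt ℝ f y)
    (hhom : ∀ c : ℝ, 0 < c → f (c • y) = c ^ d * f y) :
    fderiv ℝ f y y = d * f y := by
  have hg : HasDerivAt (fun c : ℝ => c • y) y 1 := by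
    simpa using (hasDerivAt_id (1:ℝ)).smul_const y
  have h1 : HasDerivAt (fun c : ℝ => f (c • y)) (fderiv ℝ f y y) 1 := by
    have hf' : HasFDerivAt f (fderiv ℝ f y) ((1:ℝ) • y) := by
      rw [one_smul]; exact hf.hasFDerivAt
    have := hf'.comp_hasDerivAt 1 hg; exact this
  have h2 : HasDerivAt (fun c : ℝ => c ^ d * f y) ((d : ℝ) * f y) 1 := by
    simpa using (hasDerivAt_zpow d (1:ℝ) (Or.inl one_ne_zero)).mul_const (f y)
  have heq : (fun c : ℝ => c ^ d * f y) =ᶠ[nhds (1:ℝ)] (fun c => f (c • y)) := by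
    filter_upwards [eventually_gt_nhds zero_lt_one] with c hc
    exact (hhom c hc).symm
  exact h1.unique (h2.congr_of_eventuallyEq heq.symm)

lemma pd_hom {m : ℕ} {f : (Fin m → ℝ) → ℝ} (d : ℤ)
    (hf : DifferentiableOn ℝ f {y : Fin m → ℝ | y ≠ 0})
    (hhom : ∀ c : ℝ, 0 < c → ∀ x : Fin m → ℝ, x ≠ 0 → f (c • x) = c ^ d * f x)
    (k : Fin m) (c : ℝ) (hc : 0 < c) (x : Fin m → ℝ) (hx : x ≠ 0) :
    pd k f (c • x) = c ^ (d - 1) * pd k f x := by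
  have hs := sOpen m
  have hcx : c • x ≠ 0 := smul_ne_zero (ne_of_gt hc) hx
  have hfx : DifferentiableAt ℝ f x := hf.differentiableAt (hs.mem_nhds hx)
  have hfcx : DifferentiableAt ℝ f (c • x) := hf.differentiableAt (hs.mem_nhds hcx)
  have hlin : HasFDerivAt (fun z : Fin m → ℝ => c • z)
      (c • ContinuousLinearMap.id ℝ (Fin m → ℝ)) x :=
    (ContinuousLinearMap.id ℝ (Fin m → ℝ)).hasFDerivAt.const_smul c
  have h1 : HasFDerivAt (fun z => f (c • z))
      ((fderiv ℝ f (c • x)).comp (c • ContinuousLinearMap.id ℝ (Fin m → ℝ))) x :=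
    hfcx.hasFDerivAt.comp x hlin
  have h2 : (fun z : Fin m → ℝ => c ^ d * f z) =ᶠ[nhds x] (fun z => f (c • z)) := by
    filter_upwards [hs.mem_nhds hx] with z hz
    exact (hhom c hc z hz).symm
  have h3 : HasFDerivAt (fun z => c ^ d * f z) ((c:ℝ) ^ d • fderiv ℝ f x) x :=
    hfx.hasFDerivAt.const_mul (c ^ d)
  have h4 := (h3.congr_of_eventuallyEq h2.symm).unique h1
  have h5 := congrArg (fun L : (Fin m → ℝ) →L[ℝ] ℝ => L (Pi.single k 1)) h4
  simp [pd] at h5 ⊢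
  -- h5 : c ^ d * fderiv f x (single k 1) = fderiv f (c•x) (c • single k 1) roughly
  have hc0 : c ≠ 0 := ne_of_gt hc
  rw [zpow_sub_one₀ hc0]
  field_simp at h5 ⊢
  linarith [h5]

lemma pd_pd_eq {m : ℕ} {f : (Fin m → ℝ) → ℝ} {y : Fin m → ℝ}
    (hd : DifferentiableAt ℝ (fderiv ℝ f) y) (a b : Fin m) :
    pd a (pd b f) y = fderiv ℝ (fderiv ℝ f) y (Pi.single a 1) (Pi.single b 1) := by
  have h := hd.hasFDerivAt.clm_apply (hasFDerivAt_const (Pi.single b (1:ℝ)) y)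
  have h2 := h.fderiv
  have : pd a (pd b f) y = fderiv ℝ (fun z => fderiv ℝ f z (Pi.single b 1)) y (Pi.single a 1) := rfl
  rw [this, h2]
  simp

lemma pd_comm {m : ℕ} {f : (Fin m → ℝ) → ℝ} {s : Set (Fin m → ℝ)} (hs : IsOpen s)
    (hf : ContDiffOn ℝ ∞ f s) {y : Fin m → ℝ} (hy : y ∈ s) (i k : Fin m) :
    pd i (pd k f) y = pd k (pd i f) y := by
  have hat : ContDiffAt ℝ ∞ f y := hf.contDiffAt (hs.mem_nhds hy)
  have hsymm : IsSymmSndFDerivAt ℝ f y := hat.isSymmSndFDerivAt (by simp; exact WithTop.coe_le_coe.mpr le_top)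
  have hd : DifferentiableAt ℝ (fderiv ℝ f) y :=
    (hat.fderiv_right (m := ∞) (by simp)).differentiableAt (by norm_cast)
  rw [pd_pd_eq hd, pd_pd_eq hd, hsymm]

open Finset in
/-- if `R` is smooth, positively 0-homogeneous on `ℝⁿ \ {0}` and its third
vertical derivatives decompose as `R_{,i,j,k} = A_{ij} I_k + B_i g_{jk}` with `I_k y^k = 0`,
then `R_{,i} = 0` for all `i`. -/
theorem third_derivative_decomposition_forces_einstein (n : ℕ)
    (R : (Fin n → ℝ) → ℝ)
    (hR : ContDiffOn ℝ (⊤ : ℕ∞) R {y | y ≠ 0})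
    (hRhom : ∀ c : ℝ, 0 < c → ∀ y : Fin n → ℝ, R (c • y) = R y)
    (g : (Fin n → ℝ) → Matrix (Fin n) (Fin n) ℝ)
    (hgpos : ∀ y, y ≠ 0 → (g y).PosDef)
    (ylow : (Fin n → ℝ) → Fin n → ℝ)
    (hylow : ∀ y j, ylow y j = ∑ k, g y j k * y k)
    (A : (Fin n → ℝ) → Fin n → Fin n → ℝ) (B : (Fin n → ℝ) → Fin n → ℝ)
    (I : (Fin n → ℝ) → Fin n → ℝ)
    (hIy : ∀ y, y ≠ 0 → ∑ k, I y k * y k = 0)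
    (hdec : ∀ y, y ≠ 0 → ∀ i j k,
      pd i (pd j (pd k R)) y = A y i j * I y k + B y i * g y j k) :
    ∀ y : Fin n → ℝ, y ≠ 0 → ∀ i : Fin n, pd i R y = 0 := by
  intro y hy
  have hs : IsOpen {y : Fin n → ℝ | y ≠ 0} := sOpen n
  have hy' : y ∈ {y : Fin n → ℝ | y ≠ 0} := hy
  have hR' : ContDiffOn ℝ ∞ R {y : Fin n → ℝ | y ≠ 0} := hR.of_le (by simp)
  have hone : (1 : WithTop ℕ∞) ≤ ∞ := by exact_mod_cast le_top
  have hCD1 : ∀ k, ContDiffOn ℝ ∞ (pd k R) {y : Fin n → ℝ | y ≠ 0} :=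
    fun k => pd_contDiffOn hs hR' k
  have hCD2 : ∀ i j, ContDiffOn ℝ ∞ (pd i (pd j R)) {y : Fin n → ℝ | y ≠ 0} :=
    fun i j => pd_contDiffOn hs (hCD1 j) i
  have hom0 : ∀ c : ℝ, 0 < c → ∀ x : Fin n → ℝ, x ≠ 0 → R (c • x) = c ^ (0:ℤ) * R x := by
    intro c hc x hx; simp [hRhom c hc x]
  have hom1 : ∀ k, ∀ c : ℝ, 0 < c → ∀ x : Fin n → ℝ, x ≠ 0 →
      pd k R (c • x) = c ^ (-1:ℤ) * pd k R x := by
    intro k c hc x hx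
    have := pd_hom 0 (hR'.differentiableOn (by simp)) hom0 k c hc x hx
    norm_num at this ⊢
    exact this
  have hom2 : ∀ i j, ∀ c : ℝ, 0 < c → ∀ x : Fin n → ℝ, x ≠ 0 →
      pd i (pd j R) (c • x) = c ^ (-2:ℤ) * pd i (pd j R) x := by
    intro i j c hc x hx
    have := pd_hom (-1) ((hCD1 j).differentiableOn (by simp))
      (fun c hc x hx => hom1 j c hc x hx) i c hc x hx
    norm_num at this ⊢
    exact this
  have hdiffR : DifferentiableAt ℝ R y :=
    (hR'.differentiableOn (by simp)).differentiableAt (hs.mem_nhds hy')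
  have hdiff1 : ∀ j, DifferentiableAt ℝ (pd j R) y :=
    fun j => ((hCD1 j).differentiableOn (by simp)).differentiableAt (hs.mem_nhds hy')
  have hdiff2 : ∀ i j, DifferentiableAt ℝ (pd i (pd j R)) y :=
    fun i j => ((hCD2 i j).differentiableOn (by simp)).differentiableAt (hs.mem_nhds hy')
  -- Euler identities
  have F0 : ∑ k, y k * pd k R y = 0 := by
    have := euler_aux 0 hdiffR (fun c hc => hom0 c hc y hy)
    rw [fderiv_eq_sum_pd] at this
    simpa using this
  have F1 : ∀ j, ∑ i, y i * pd i (pd j R) y = -(pd j R y) := by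
    intro j
    have := euler_aux (-1) (hdiff1 j) (fun c hc => hom1 j c hc y hy)
    rw [fderiv_eq_sum_pd] at this
    simpa using this
  have F2 : ∀ i j, ∑ k, y k * pd k (pd i (pd j R)) y = -2 * pd i (pd j R) y := by
    intro i j
    have := euler_aux (-2) (hdiff2 i j) (fun c hc => hom2 i j c hc y hy)
    rw [fderiv_eq_sum_pd] at this
    rw [this]; push_cast; ring
  -- Schwarz symmetry
  have hsw : ∀ i j k, pd i (pd j (pd k R)) y = pd k (pd i (pd j R)) y := by
    intro i j k
    have hev : pd j (pd k R) =ᶠ[nhds y] pd k (pd j R) := by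
      filter_upwards [hs.mem_nhds hy'] with z hz
      exact pd_comm hs hR' hz j k
    have h1 : pd i (pd j (pd k R)) y = pd i (pd k (pd j R)) y := by
      show fderiv ℝ (pd j (pd k R)) y _ = fderiv ℝ (pd k (pd j R)) y _
      rw [hev.fderiv_eq]
    rw [h1]
    exact pd_comm hs (hCD1 j) hy' i k
  -- Key contraction 1:  -2 ∂i∂j R = B i * ylow j
  have key1 : ∀ i j, -2 * pd i (pd j R) y = B y i * ylow y j := by
    intro i j
    have : ∑ k, y k * pd k (pd i (pd j R)) y
        = ∑ k, y k * (A y i j * I y k + B y i * g y j k) := by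
      apply Finset.sum_congr rfl
      intro k _
      rw [← hsw i j k, hdec y hy i j k]
    rw [F2 i j] at this
    rw [this]
    have : ∑ k, y k * (A y i j * I y k + B y i * g y j k)
        = A y i j * (∑ k, I y k * y k) + B y i * (∑ k, g y j k * y k) := by
      rw [Finset.mul_sum, Finset.mul_sum, ← Finset.sum_add_distrib]
      apply Finset.sum_congr rfl
      intro k _; ring
    rw [this, hIy y hy, ← hylow y j]
    ring
  -- Key contraction 2:  2 ∂j R = C * ylow j
  set C := ∑ i, B y i * y i with hC
  have key2 : ∀ j, 2 * pd j R y = C * ylow y j := by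
    intro j
    have h := Finset.sum_congr rfl (fun i (_ : i ∈ Finset.univ) =>
      congrArg (fun t => y i * t) ((by linarith [key1 i j] : pd i (pd j R) y = -(B y i * ylow y j) / 2)))
    rw [F1 j] at h
    have h2 : ∑ i, y i * (-(B y i * ylow y j) / 2) = -(C * ylow y j) / 2 := by
      have e1 : ∀ i : Fin n, y i * (-(B y i * ylow y j) / 2)
          = (-(ylow y j) / 2) * (B y i * y i) := fun i => by ring
      rw [Finset.sum_congr rfl (fun i _ => e1 i), ← Finset.mul_sum, ← hC]
      ring
    rw [h2] at h
    linarith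
  -- positivity of Q
  have hQpos : 0 < ∑ j, y j * ylow y j := by
    have hpd := (hgpos y hy).dotProduct_mulVec_pos hy
    have heq : dotProduct (star y) ((g y).mulVec y) = ∑ j, y j * ylow y j := by
      simp only [dotProduct, Matrix.mulVec, hylow]
      simp
    rw [heq] at hpd
    exact hpd
  -- conclude C = 0
  have hC0 : C = 0 := by
    have h := Finset.sum_congr rfl (fun j (_ : j ∈ Finset.univ) =>
      congrArg (fun t => y j * t) ((by linarith [key2 j] : pd j R y = C * ylow y j / 2)))
    rw [F0] at h
    have h2 : ∑ j, y j * (C * ylow y j / 2) = C * (∑ j, y j * ylow y j) / 2 := by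
      rw [Finset.mul_sum, Finset.sum_div]
      apply Finset.sum_congr rfl
      intro j _; ring
    rw [h2] at h
    have := hQpos
    by_contra hne
    have : C * (∑ j, y j * ylow y j) ≠ 0 := mul_ne_zero hne (ne_of_gt hQpos)
    apply this
    linarith
  intro i
  have := key2 i
  rw [hC0] at this
  linarith
end

section
/- Under the un-normal Ricci flow of a C3-like metric, the variation of the fully I-contracted Cartan tensor satisfies C'_{ijk}I^iI^jI^k = (a_ih'_{jk} + a_jh'_{ki} + a_kh'_{ij})I^iI^jI^k + 3a'_iI^i‖I‖² − 6 b_i ρ_{,j} ‖I‖² I^iI^j, where I'_i = −ρ_{,i} is used and b'_i-terms are contracted via I_jI_k. -/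
/-!
Fix the vector `u = Iup t` (the contravariant `I^i` at time `t`) and contract the C3-like
Cartan tensor against it at every time `s`: by cyclic symmetry
`C(s)(u,u,u) = 3 (a(s)·u)(u·h(s)u) + 3 (b(s)·u)(I(s)·u)²`. The left side of the claim is the
derivative of this scalar at `s = t`, because `u` does not move. Differentiating the right side
and evaluating at `t` with `h u = I`, `b' = 0` and `I' = −ρ` gives the formula; the term
`3 (a·u)(u·h'u)` is again the contraction of the cyclic sum `a_i h'_{jk} + a_j h'_{ki} + a_k h'_{ij}`.
-/

open Finset Matrix

section CubicForm

variable {ι R : Type*} [Fintype ι] [CommSemiring R]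

def cubicForm (T : ι → ι → ι → R) (u : ι → R) : R :=
  ∑ i, ∑ j, ∑ k, T i j k * u i * u j * u k

theorem cubicForm_add (T S : ι → ι → ι → R) (u : ι → R) :
    cubicForm (fun i j k => T i j k + S i j k) u = cubicForm T u + cubicForm S u := by
  simp only [cubicForm, add_mul, sum_add_distrib]

theorem cubicForm_rotate (T : ι → ι → ι → R) (u : ι → R) :
    cubicForm (fun i j k => T j k i) u = cubicForm T u := by
  unfold cubicForm
  rw [sum_comm]
  refine sum_congr rfl fun j _ => ?_
  rw [sum_comm]
  exact sum_congr rfl fun k _ => sum_congr rfl fun i _ => by ring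

theorem cubicForm_cyclicSum (T : ι → ι → ι → R) (u : ι → R) :
    cubicForm (fun i j k => T i j k + T j k i + T k i j) u = 3 * cubicForm T u := by
  rw [cubicForm_add, cubicForm_add, cubicForm_rotate,
    cubicForm_rotate (fun i j k => T j k i), cubicForm_rotate]
  ring

theorem cubicForm_mul_matrix (f : ι → R) (M : Matrix ι ι R) (u : ι → R) :
    cubicForm (fun i j k => f i * M j k) u = (f ⬝ᵥ u) * (u ⬝ᵥ M *ᵥ u) := by
  simp only [cubicForm, dotProduct, mulVec, sum_mul]
  simp only [mul_sum]
  exact sum_congr rfl fun i _ => sum_congr rfl fun j _ => sum_congr rfl fun k _ => by ring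

theorem cubicForm_mul_mul (f g p : ι → R) (u : ι → R) :
    cubicForm (fun i j k => f i * g j * p k) u = (f ⬝ᵥ u) * (g ⬝ᵥ u) * (p ⬝ᵥ u) := by
  have hM : (fun i j k => f i * g j * p k) = fun i j k => f i * vecMulVec g p j k := by
    funext i j k
    rw [vecMulVec_apply, mul_assoc]
  rw [hM, cubicForm_mul_matrix, vecMulVec_mulVec, dotProduct_smul, op_smul_eq_mul,
    dotProduct_comm u g]
  ring

theorem cubicForm_cyclicSum_mul_matrix (f : ι → R) (M : Matrix ι ι R) (u : ι → R) :
    cubicForm (fun i j k => f i * M j k + f j * M k i + f k * M i j) u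
      = 3 * (f ⬝ᵥ u) * (u ⬝ᵥ M *ᵥ u) := by
  rw [cubicForm_cyclicSum (fun i j k => f i * M j k), cubicForm_mul_matrix, mul_assoc]

theorem cubicForm_c3like (a b I u : ι → R) (h : Matrix ι ι R) :
    cubicForm (fun i j k => a i * h j k + a j * h k i + a k * h i j
      + b i * I j * I k + b j * I i * I k + b k * I i * I j) u
      = 3 * (a ⬝ᵥ u) * (u ⬝ᵥ h *ᵥ u) + 3 * (b ⬝ᵥ u) * (I ⬝ᵥ u) ^ 2 := by
  set T : ι → ι → ι → R := fun i j k => a i * h j k + b i * I j * I k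
  calc _ = cubicForm (fun i j k => T i j k + T j k i + T k i j) u := by
        congr; funext i j k; ring
    _ = 3 * (cubicForm (fun i j k => a i * h j k) u
          + cubicForm (fun i j k => b i * I j * I k) u) := by
        rw [cubicForm_cyclicSum, cubicForm_add]
    _ = _ := by
        rw [cubicForm_mul_matrix, cubicForm_mul_mul]; ring

end CubicForm

section Deriv

variable {ι 𝕜 : Type*} [Fintype ι] [NontriviallyNormedField 𝕜] {t : 𝕜}

theorem hasDerivAt_dotProduct_const {f : 𝕜 → ι → 𝕜} {f' : ι → 𝕜}
    (hf : ∀ i, HasDerivAt (fun s => f s i) (f' i) t) (u : ι → 𝕜) :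
    HasDerivAt (fun s => f s ⬝ᵥ u) (f' ⬝ᵥ u) t :=
  HasDerivAt.fun_sum fun i _ => (hf i).mul_const (u i)

theorem hasDerivAt_dotProduct_mulVec_const {M : 𝕜 → Matrix ι ι 𝕜} {M' : Matrix ι ι 𝕜}
    (hM : ∀ i j, HasDerivAt (fun s => M s i j) (M' i j) t) (u : ι → 𝕜) :
    HasDerivAt (fun s => u ⬝ᵥ M s *ᵥ u) (u ⬝ᵥ M' *ᵥ u) t := by
  simp only [dotProduct_comm u]
  exact hasDerivAt_dotProduct_const (fun i => hasDerivAt_dotProduct_const (hM i) u) u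

theorem hasDerivAt_cubicForm_const {T : 𝕜 → ι → ι → ι → 𝕜} {T' : ι → ι → ι → 𝕜}
    (hT : ∀ i j k, HasDerivAt (fun s => T s i j k) (T' i j k) t) (u : ι → 𝕜) :
    HasDerivAt (fun s => cubicForm (T s) u) (cubicForm T' u) t :=
  HasDerivAt.fun_sum fun i _ => HasDerivAt.fun_sum fun j _ => HasDerivAt.fun_sum fun k _ =>
    (((hT i j k).mul_const (u i)).mul_const (u j)).mul_const (u k)

end Deriv

open Finset in
/-- under the un-normal Ricci flow of a C3-like metric (with `I'_i = −ρ_{,i}`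
and `b' = 0`), the variation of the fully `I`-contracted Cartan tensor satisfies
`C'_{ijk} I^i I^j I^k = Σ_cyc a_i h'_{jk} I^i I^j I^k + 3 a'_i I^i ‖I‖²
  − 6 (b_i I^i)(ρ_{,j} I^j) ‖I‖²`. -/
theorem c3like_cartan_variation_contracted (n : ℕ)
    (a b I Iup rho' : ℝ → Fin n → ℝ)
    (h : ℝ → Fin n → Fin n → ℝ)
    (C : ℝ → Fin n → Fin n → Fin n → ℝ)
    (hC : ∀ t i j k, C t i j k = a t i * h t j k + a t j * h t k i + a t k * h t i j
      + b t i * I t j * I t k + b t j * I t i * I t k + b t k * I t i * I t j)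
    (hhI : ∀ t i, ∑ j, h t i j * Iup t j = I t i)
    (hadiff : ∀ i, Differentiable ℝ (fun t => a t i))
    (hbdiff : ∀ i, Differentiable ℝ (fun t => b t i))
    (hIdiff : ∀ i, Differentiable ℝ (fun t => I t i))
    (hhdiff : ∀ i j, Differentiable ℝ (fun t => h t i j))
    (hI' : ∀ t i, deriv (fun s => I s i) t = - rho' t i)
    (hb' : ∀ t i, deriv (fun s => b s i) t = 0) :
    ∀ t : ℝ,
      ∑ i, ∑ j, ∑ k, deriv (fun s => C s i j k) t * Iup t i * Iup t j * Iup t k =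
        (∑ i, ∑ j, ∑ k,
          (a t i * deriv (fun s => h s j k) t + a t j * deriv (fun s => h s k i) t
            + a t k * deriv (fun s => h s i j) t) * Iup t i * Iup t j * Iup t k)
        + 3 * (∑ i, deriv (fun s => a s i) t * Iup t i) * (∑ m, I t m * Iup t m)
        - 6 * (∑ i, b t i * Iup t i) * (∑ j, rho' t j * Iup t j)
            * (∑ m, I t m * Iup t m) := by
  intro t
  set u := Iup t
  have hCs : ∀ s, C s = fun i j k => a s i * h s j k + a s j * h s k i + a s k * h s i j
      + b s i * I s j * I s k + b s j * I s i * I s k + b s k * I s i * I s j :=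
    fun s => funext fun i => funext fun j => funext fun k => hC s i j k
  have hCdiff : ∀ i j k, Differentiable ℝ (fun s => C s i j k) := by simp only [hCs]; fun_prop
  have hLHS := hasDerivAt_cubicForm_const (fun i j k => (hCdiff i j k t).hasDerivAt) u
  have hform : (fun s => cubicForm (C s) u) = fun s =>
      3 * (a s ⬝ᵥ u) * (u ⬝ᵥ h s *ᵥ u) + 3 * (b s ⬝ᵥ u) * (I s ⬝ᵥ u) ^ 2 :=
    funext fun s => by rw [hCs]; exact cubicForm_c3like ..
  rw [hform] at hLHS
  have hRHS :=
    (((hasDerivAt_dotProduct_const (fun i => (hadiff i t).hasDerivAt) u).const_mul 3).mul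
      (hasDerivAt_dotProduct_mulVec_const (fun i j => (hhdiff i j t).hasDerivAt) u)).add
    (((hasDerivAt_dotProduct_const (fun i => (hbdiff i t).hasDerivAt) u).const_mul 3).mul
      ((hasDerivAt_dotProduct_const (fun i => (hIdiff i t).hasDerivAt) u).pow 2))
  have hderiv := hLHS.unique hRHS
  have hhu : h t *ᵥ u = I t := funext (hhI t)
  have hb'u : (fun i => deriv (fun s => b s i) t) ⬝ᵥ u = 0 := by
    simp only [hb', zero_dotProduct']
  have hI'u : (fun i => deriv (fun s => I s i) t) ⬝ᵥ u = -(rho' t ⬝ᵥ u) := by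
    simp only [hI', ← neg_dotProduct]
    rfl
  have hcyc := cubicForm_cyclicSum_mul_matrix (a t) (fun j k => deriv (fun s => h s j k) t) u
  rw [hhu, hb'u, hI'u, dotProduct_comm u] at hderiv
  simp only [cubicForm, dotProduct] at hderiv hcyc ⊢
  linear_combination hderiv - hcyc
end
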